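/- arXiv:1907.00813 — 2 statements merged into one kernel-verified Lean document; each statement's English description precedes it below -/
import Mathlib

section
/- Let ε > 0 and set ε' = (e^ε−1)/(2(e^ε+1)). Let p_min, p_x, p_max be reals with 0 < p_min ≤ p_x ≤ p_max, p_max ≤ e^ε · p_min, and p_min + p_max ≤ 1. Then 0 ≤ 1/2 + p_x/(2ε'(p_min + p_max)) − 1/(4ε') ≤ 1; i.e., this quantity is a valid probability. -/
/-- Validity computation in Case 1 of the reduction (Lemma 3.2): with
`ε' = (e^ε - 1)/(2(e^ε + 1))`, if `0 < p_min ≤ p_x ≤ p_max`, `p_max ≤ e^ε · p_min`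
(ε-local differential privacy of the randomizer) and `p_min + p_max ≤ 1`, then
`1/2 + p_x/(2ε'(p_min + p_max)) − 1/(4ε')` is a valid probability. -/
theorem stmt_2 (ε : ℝ) (hε : 0 < ε)
    (pmin px pmax : ℝ)
    (hpmin : 0 < pmin) (h1 : pmin ≤ px) (h2 : px ≤ pmax)
    (hdp : pmax ≤ Real.exp ε * pmin) (hsum : pmin + pmax ≤ 1) :
    0 ≤ 1 / 2 + px / (2 * ((Real.exp ε - 1) / (2 * (Real.exp ε + 1))) * (pmin + pmax))
          - 1 / (4 * ((Real.exp ε - 1) / (2 * (Real.exp ε + 1)))) ∧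
    1 / 2 + px / (2 * ((Real.exp ε - 1) / (2 * (Real.exp ε + 1))) * (pmin + pmax))
          - 1 / (4 * ((Real.exp ε - 1) / (2 * (Real.exp ε + 1)))) ≤ 1 := by
  set E := Real.exp ε with hE
  have hE1 : 1 < E := by
    rw [hE, show (1:ℝ) = Real.exp 0 by simp]
    exact Real.exp_lt_exp.mpr hε
  have hEm : 0 < E - 1 := by linarith
  have hEp : 0 < E + 1 := by linarith
  have hs : 0 < pmin + pmax := by linarith
  have key1 : (E + 1) * (pmax - pmin) ≤ (E - 1) * (pmin + pmax) := by nlinarith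
  have hne1 : E - 1 ≠ 0 := ne_of_gt hEm
  have hne2 : E + 1 ≠ 0 := ne_of_gt hEp
  have hne3 : pmin + pmax ≠ 0 := ne_of_gt hs
  have hrw : 1 / 2 + px / (2 * ((E - 1) / (2 * (E + 1))) * (pmin + pmax))
      - 1 / (4 * ((E - 1) / (2 * (E + 1))))
      = 1 / 2 + (E + 1) * (2 * px - (pmin + pmax)) / (2 * (E - 1) * (pmin + pmax)) := by
    field_simp
    ring
  rw [hrw]
  have hden : 0 < 2 * (E - 1) * (pmin + pmax) := by positivity
  constructor
  · rw [← sub_nonneg]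
    have : -(1/2 : ℝ) * (2 * (E - 1) * (pmin + pmax)) ≤ (E + 1) * (2 * px - (pmin + pmax)) := by
      nlinarith
    have := (le_div_iff₀ hden).mpr this
    linarith
  · have : (E + 1) * (2 * px - (pmin + pmax)) ≤ (1/2 : ℝ) * (2 * (E - 1) * (pmin + pmax)) := by
      nlinarith
    have := (div_le_iff₀ hden).mpr this
    linarith
end

section
/- Let ε' > 0, let m be a natural number, and let i, j ∈ {1, …, m}. Define p, q : {1,…,m} → ℝ by p(t) = e^{ε'}/(e^{ε'}+1) if t = i and p(t) = 1/(e^{ε'}+1) otherwise, and q(t) = e^{ε'}/(e^{ε'}+1) if t = j and q(t) = 1/(e^{ε'}+1) otherwise. For a parameter r ∈ [0,1] and a bit z ∈ {0,1} write B(r,z) = r if z = 1 and B(r,z) = 1 − r if z = 0. Then for every z : {1,…,m} → {0,1}, ∏_{t=1}^m B(p(t), z(t)) ≤ e^{2ε'} · ∏_{t=1}^m B(q(t), z(t)). -/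
open Real

/-- `rrBern r z` is the probability that a Bernoulli(`r`) bit equals `z`. -/
noncomputable def rrBern (r : ℝ) (z : Bool) : ℝ := if z then r else 1 - r

/-- `oneHotProb ε' i t` is the Bernoulli parameter of coordinate `t` of a user's
transcript whose data singles out coordinate `i`: it is the boosted value
`e^{ε'}/(e^{ε'}+1)` if `t = i` and `1/(e^{ε'}+1)` otherwise. -/
noncomputable def oneHotProb {m : ℕ} (ε' : ℝ) (i t : Fin m) : ℝ :=
  if t = i then exp ε' / (exp ε' + 1) else 1 / (exp ε' + 1)

/-- Core of the privacy proof of HLSolver (Theorem 4.3): a user's transcript of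
`m` independent Bernoulli outputs, exactly one of which has the boosted
parameter, changes its likelihood by a factor of at most `e^{2ε'}` when the
boosted coordinate changes from `i` to `j`. -/
theorem stmt_8 (ε' : ℝ) (hε' : 0 < ε') (m : ℕ) (i j : Fin m)
    (z : Fin m → Bool) :
    ∏ t, rrBern (oneHotProb ε' i t) (z t) ≤
      Real.exp (2 * ε') * ∏ t, rrBern (oneHotProb ε' j t) (z t) := by
  set E := exp ε' with hEdef
  have hE1 : 1 < E := by
    rw [hEdef]; calc (1:ℝ) = Real.exp 0 := by simp
    _ < Real.exp ε' := Real.exp_lt_exp.mpr hε'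
  have hden : (0:ℝ) < E + 1 := by linarith
  set c : Fin m → ℝ := fun t => if t ∈ ({i, j} : Finset (Fin m)) then E else 1 with hc
  have hne : E + 1 ≠ 0 := ne_of_gt hden
  have hE0 : (0:ℝ) < E := lt_trans one_pos hE1
  have hb1 : E / (E + 1) ≤ 1 := (div_le_one hden).mpr (by linarith)
  have hb2 : 1 / (E + 1) ≤ 1 := (div_le_one hden).mpr (by linarith)
  have hb3 : (0:ℝ) < 1 / (E + 1) := by positivity
  have hb4 : (0:ℝ) < E / (E + 1) := by positivity
  have hnonneg : ∀ (k t : Fin m), 0 ≤ rrBern (oneHotProb ε' k t) (z t) := by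
    intro k t
    unfold rrBern oneHotProb
    rw [← hEdef]
    split_ifs <;> linarith
  have hpt : ∀ t : Fin m, rrBern (oneHotProb ε' i t) (z t) ≤
      c t * rrBern (oneHotProb ε' j t) (z t) := by
    intro t
    unfold rrBern oneHotProb
    rw [hc, ← hEdef]
    simp only [Finset.mem_insert, Finset.mem_singleton]
    split_ifs
    all_goals try (exfalso; tauto)
    all_goals field_simp
    all_goals try nlinarith [hE1, hE0, sq_nonneg (E - 1)]
    all_goals (rw [div_le_div_iff hden hden]; nlinarith [hE1, hE0])
  have key : ∏ t, rrBern (oneHotProb ε' i t) (z t) ≤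
      ∏ t, (c t * rrBern (oneHotProb ε' j t) (z t)) :=
    Finset.prod_le_prod (fun t _ => hnonneg i t) (fun t _ => hpt t)
  rw [Finset.prod_mul_distrib] at key
  have hcard : ({i, j} : Finset (Fin m)).card ≤ 2 :=
    le_trans (Finset.card_insert_le _ _) (by simp)
  have hcprod : ∏ t, c t ≤ Real.exp (2 * ε') := by
    rw [hc]
    rw [Finset.prod_ite_mem, Finset.univ_inter, Finset.prod_const]
    calc E ^ ({i, j} : Finset (Fin m)).card ≤ E ^ 2 :=
          pow_le_pow_right₀ (by linarith) hcard
      _ = Real.exp (2 * ε') := by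
          rw [hEdef, ← Real.exp_nat_mul]; norm_num
  have hq : 0 ≤ ∏ t, rrBern (oneHotProb ε' j t) (z t) :=
    Finset.prod_nonneg (fun t _ => hnonneg j t)
  calc ∏ t, rrBern (oneHotProb ε' i t) (z t)
      ≤ (∏ t, c t) * ∏ t, rrBern (oneHotProb ε' j t) (z t) := key
    _ ≤ Real.exp (2 * ε') * ∏ t, rrBern (oneHotProb ε' j t) (z t) :=
        mul_le_mul_of_nonneg_right hcprod hq
end
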